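/- arXiv:1502.02288 — 6 statements merged into one kernel-verified Lean document; each statement's English description precedes it below -/
import Mathlib

section
/- Let V be a finite nonempty type, let T : SimpleGraph V be a tree, and let G be a group acting on V by graph automorphisms of T. Then either there exists a vertex v ∈ V with g · v = v for all g ∈ G, or there exists an edge {u, v} of T (so T.Adj u v) such that every g ∈ G maps the unordered pair {u, v} to itself. -/
/-!
Automorphisms of a tree preserve its set of non-leaves, and when that set is nonempty it induces
a strictly smaller tree. Stripping leaves repeatedly therefore ends in an invariant subtree all of
whose vertices are leaves, that is, a single vertex or a single edge.
-/

lemma Sym2.map_eq_self_of_forall_eq_or_eq {α : Type*} {f : α → α} (hf : Function.Injective f)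
    {u x : α} (hux : u ≠ x) (hall : ∀ z, z = u ∨ z = x) : Sym2.map f s(u, x) = s(u, x) := by
  have hne := hf.ne hux
  rw [Sym2.map_mk]
  rcases hall (f u) with h₁ | h₁ <;> rcases hall (f x) with h₂ | h₂ <;> simp_all [Sym2.eq_swap]

namespace SimpleGraph

variable {V W : Type*} {G : SimpleGraph V} {H : SimpleGraph W}

lemma Iso.nontrivial_neighborSet_iff (σ : G ≃g H) (v : V) :
    (H.neighborSet (σ v)).Nontrivial ↔ (G.neighborSet v).Nontrivial := by
  rw [← σ.image_neighborSet, Set.image_nontrivial σ.injective]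

lemma IsTree.induce_nontrivial_neighborSet (hG : G.IsTree)
    (hs : {v | (G.neighborSet v).Nontrivial}.Nonempty) :
    (G.induce {v | (G.neighborSet v).Nontrivial}).IsTree where
  connected := (connected_iff _).2
    ⟨hG.connected.preconnected.induce_of_degree_eq_one fun _ hv => Set.not_nontrivial_iff.1 hv,
      hs.to_subtype⟩
  isAcyclic := hG.isAcyclic.induce _

lemma IsTree.exists_subsingleton_neighborSet [Finite V] (hG : G.IsTree) :
    ∃ v, (G.neighborSet v).Subsingleton := by
  cases subsingleton_or_nontrivial V with
  | inl _ => exact ⟨hG.connected.nonempty.some, Set.subsingleton_of_subsingleton⟩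
  | inr _ =>
    classical
    have := Fintype.ofFinite V
    obtain ⟨v, hv⟩ := hG.exists_vert_degree_one_of_nontrivial
    obtain ⟨w, -, hw⟩ := degree_eq_one_iff_existsUnique_adj.1 hv
    exact ⟨v, fun a ha b hb => (hw a ha).trans (hw b hb).symm⟩

lemma Preconnected.subsingleton_or_exists_adj_forall_eq_or_eq (hG : G.Preconnected)
    (h : ∀ v, (G.neighborSet v).Subsingleton) :
    Subsingleton V ∨ ∃ u x, G.Adj u x ∧ ∀ z, z = u ∨ z = x := by
  rcases subsingleton_or_nontrivial V with hV | hV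
  · exact .inl hV
  right
  obtain ⟨u⟩ := hV.to_nonempty
  obtain ⟨x, hux⟩ := hG.exists_adj_of_nontrivial u
  refine ⟨u, x, hux, fun z => or_iff_not_imp_left.2 fun hzu => ?_⟩
  obtain ⟨p, hp⟩ := hG.exists_isPath u z
  have hnil := p.not_nil_of_ne (Ne.symm hzu)
  have hsnd : p.snd = x := h u (p.adj_snd hnil) hux
  by_contra hzx
  exact hp.isTrail.not_mem_support_of_subsingleton_neighborSet hux.ne.symm (Ne.symm hzx) (h x)
    (hsnd ▸ List.mem_of_mem_tail (p.snd_mem_tail_support hnil))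

theorem IsTree.exists_fixed_vertex_or_invariant_edge [Finite V] {T : SimpleGraph V}
    (hT : T.IsTree) {ι : Type*} (σ : ι → T ≃g T) :
    (∃ v, ∀ i, σ i v = v) ∨ ∃ u v, T.Adj u v ∧ ∀ i, Sym2.map (σ i) s(u, v) = s(u, v) := by
  induction h : Nat.card V using Nat.strong_induction_on generalizing V with
  | _ n ih =>
  set s := {v | (T.neighborSet v).Nontrivial}
  rcases s.eq_empty_or_nonempty with hs | hs
  · have hleaf v : (T.neighborSet v).Subsingleton :=
      Set.not_nontrivial_iff.1 (Set.eq_empty_iff_forall_notMem.1 hs v)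
    rcases hT.connected.preconnected.subsingleton_or_exists_adj_forall_eq_or_eq hleaf with
      _ | ⟨u, x, hux, hall⟩
    · exact .inl ⟨hT.connected.nonempty.some, fun _ => Subsingleton.elim _ _⟩
    · exact .inr ⟨u, x, hux, fun i =>
        Sym2.map_eq_self_of_forall_eq_or_eq (σ i).injective hux.ne hall⟩
  · obtain ⟨w, hw⟩ := hT.exists_subsingleton_neighborSet
    have hlt : Nat.card s < n := h ▸ Finite.card_subtype_lt (x := w) hw.not_nontrivial
    rcases ih _ hlt (hT.induce_nontrivial_neighborSet hs)
        (fun i => (σ i).induce ((σ i).toEquiv.bijOn (σ i).nontrivial_neighborSet_iff)) rfl with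
      ⟨v, hv⟩ | ⟨u, v, huv, hinv⟩
    · exact .inl ⟨v, fun i => congrArg Subtype.val (hv i)⟩
    · refine .inr ⟨u, v, huv, fun i => ?_⟩
      simpa [Sym2.map_map] using congrArg (Sym2.map Subtype.val) (hinv i)

end SimpleGraph

theorem exists_fixed_vertex_or_invariant_edge_of_tree_action_general
    {V : Type*} [Fintype V] (T : SimpleGraph V) (hT : T.IsTree)
    {G : Type*} [Group G] (φ : G →* Equiv.Perm V)
    (hφ : ∀ (g : G) (u v : V), T.Adj (φ g u) (φ g v) ↔ T.Adj u v) :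
    (∃ v : V, ∀ g : G, φ g v = v) ∨
    (∃ u v : V, T.Adj u v ∧ ∀ g : G, Sym2.map (φ g) s(u, v) = s(u, v)) :=
  hT.exists_fixed_vertex_or_invariant_edge fun g => ⟨φ g, hφ g _ _⟩

/-- **Proposition 2.1 (combinatorial form).**
If a group `G` acts on a finite nonempty tree `T` by graph automorphisms (via a
homomorphism `φ` to the permutations of the vertices preserving adjacency), then either
some vertex is fixed by every element of `G`, or some edge `{u, v}` of `T` is mapped to
itself (as an unordered pair) by every element of `G`. -/
theorem exists_fixed_vertex_or_invariant_edge_of_tree_action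
    {V : Type*} [Fintype V] [Nonempty V] (T : SimpleGraph V) (hT : T.IsTree)
    {G : Type*} [Group G] (φ : G →* Equiv.Perm V)
    (hφ : ∀ (g : G) (u v : V), T.Adj (φ g u) (φ g v) ↔ T.Adj u v) :
    (∃ v : V, ∀ g : G, φ g v = v) ∨
    (∃ u v : V, T.Adj u v ∧ ∀ g : G, Sym2.map (φ g) s(u, v) = s(u, v)) :=
  exists_fixed_vertex_or_invariant_edge_of_tree_action_general T hT φ hφ
end

section
/- Let V be a finite type and T : SimpleGraph V a tree. Call an edge e = {u, v} of T balanced if the two connected components of the graph obtained from T by deleting e (namely the component containing u and the component containing v) have equally many vertices. Then T has at most one balanced edge, and if a balanced edge e exists, then every graph automorphism of T maps the unordered pair e to itself. -/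
/-!
Deleting an edge `uv` of a tree on `n` vertices leaves exactly two components, which partition
the vertices, so every component left by a balanced edge has `n / 2` vertices. If `u'v'` were a
second balanced edge, say with `u'` on the `u`-side of `uv`, then deleting `u'v'` leaves the whole
`v`-side of `uv` connected to `u`: a component with at least `n / 2 + 1` vertices. Automorphisms
map balanced edges to balanced edges, hence fix the unique one.
-/

/-- The edge `{u, v}` of a graph `T` is *balanced* if it is an edge and the two
components of `T` with this edge deleted (the one containing `u` and the one
containing `v`) have equally many vertices. -/
def IsBalancedEdge {V : Type*} [Fintype V] (T : SimpleGraph V) (u v : V) : Prop :=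
  T.Adj u v ∧
    Nat.card {w : V | (T.deleteEdges {s(u, v)}).Reachable u w} =
      Nat.card {w : V | (T.deleteEdges {s(u, v)}).Reachable v w}

namespace SimpleGraph

variable {V V' : Type*} {G : SimpleGraph V} {G' : SimpleGraph V'}

theorem Preconnected.reachable_or_reachable_deleteEdges (hG : G.Preconnected) (u v w : V) :
    (G.deleteEdges {s(u, v)}).Reachable u w ∨ (G.deleteEdges {s(u, v)}).Reachable v w := by
  set H := G.deleteEdges {s(u, v)}
  have step : ∀ {x y}, G.Adj x y → H.Reachable u x ∨ H.Reachable v x →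
      H.Reachable u y ∨ H.Reachable v y := by
    intro x y hxy hx
    by_cases he : s(x, y) = s(u, v)
    · rcases Sym2.eq_iff.mp he with ⟨-, rfl⟩ | ⟨-, rfl⟩
      · exact .inr .rfl
      · exact .inl .rfl
    · have hH : H.Adj x y := deleteEdges_adj.mpr ⟨hxy, he⟩
      exact hx.imp (·.trans hH.reachable) (·.trans hH.reachable)
  have propagate : ∀ {x y} (p : G.Walk x y), H.Reachable u x ∨ H.Reachable v x →
      H.Reachable u y ∨ H.Reachable v y := by
    intro x y p
    induction p with
    | nil => exact id
    | cons hxy _ ih => exact ih ∘ step hxy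
  obtain ⟨p⟩ := hG u w
  exact propagate p (.inl .rfl)

theorem reachable_deleteEdges_of_not_reachable {v a b x : V} (hva : ¬ G.Reachable v a)
    (hvx : G.Reachable v x) : (G.deleteEdges {s(a, b)}).Reachable v x := by
  classical
  obtain ⟨p⟩ := hvx
  exact reachable_deleteEdges_iff_exists_walk.mpr
    ⟨p, fun he ↦ hva ⟨p.takeUntil a (p.fst_mem_support_of_mem_edges he)⟩⟩

theorem IsBridge.ncard_add_ncard [Finite V] (hG : G.Preconnected) {u v : V}
    (hb : G.IsBridge s(u, v)) :
    {w | (G.deleteEdges {s(u, v)}).Reachable u w}.ncard +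
      {w | (G.deleteEdges {s(u, v)}).Reachable v w}.ncard = Nat.card V := by
  have hdisj : Disjoint {w | (G.deleteEdges {s(u, v)}).Reachable u w}
      {w | (G.deleteEdges {s(u, v)}).Reachable v w} :=
    Set.disjoint_left.mpr fun _ hu hv ↦ isBridge_iff.mp hb (hu.trans hv.symm)
  rw [← Set.ncard_union_eq hdisj, ← Set.ncard_univ]
  congr
  exact Set.eq_univ_of_forall (hG.reachable_or_reachable_deleteEdges u v)

def Iso.deleteEdges (φ : G ≃g G') (s : Set (Sym2 V)) :
    G.deleteEdges s ≃g G'.deleteEdges (Sym2.map φ '' s) where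
  toEquiv := φ.toEquiv
  map_rel_iff' {a b} := by
    rw [deleteEdges_adj, deleteEdges_adj]
    exact and_congr φ.map_adj_iff
      ((Sym2.map.injective φ.injective).mem_set_image (a := s(a, b))).not

theorem Iso.ncard_setOf_reachable (φ : G ≃g G') (x : V) :
    {w | G'.Reachable (φ x) w}.ncard = {w | G.Reachable x w}.ncard := by
  rw [← Nat.card_coe_set_eq, ← Nat.card_coe_set_eq]
  exact Nat.card_congr (φ.toEquiv.subtypeEquiv fun _ ↦ φ.reachable_iff.symm).symm

end SimpleGraph

open SimpleGraph

namespace IsBalancedEdge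

variable {V V' : Type*} [Fintype V] [Fintype V'] {T : SimpleGraph V} {T' : SimpleGraph V'}
  {u v u' v' : V}

theorem symm (h : IsBalancedEdge T u v) : IsBalancedEdge T v u := by
  rw [IsBalancedEdge, Sym2.eq_swap]
  exact ⟨h.1.symm, h.2.symm⟩

theorem map (h : IsBalancedEdge T u v) (φ : T ≃g T') : IsBalancedEdge T' (φ u) (φ v) := by
  have hs : Sym2.map φ '' {s(u, v)} = {s(φ u, φ v)} := by simp
  have hcard : ∀ x, {w | (T'.deleteEdges {s(φ u, φ v)}).Reachable (φ x) w}.ncard =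
      {w | (T.deleteEdges {s(u, v)}).Reachable x w}.ncard := by
    rw [← hs]
    exact (φ.deleteEdges _).ncard_setOf_reachable
  refine ⟨φ.map_adj_iff.mpr h.1, ?_⟩
  rw [Nat.card_coe_set_eq, Nat.card_coe_set_eq, hcard, hcard]
  simpa only [Nat.card_coe_set_eq] using h.2

theorem two_mul_ncard_setOf_reachable (hT : T.IsTree) (h : IsBalancedEdge T u v) (w : V) :
    2 * {x | (T.deleteEdges {s(u, v)}).Reachable w x}.ncard = Nat.card V := by
  have hsum := IsBridge.ncard_add_ncard hT.connected.preconnected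
    (isAcyclic_iff_forall_adj_isBridge.mp hT.isAcyclic h.1)
  have hbal := h.2
  rw [Nat.card_coe_set_eq, Nat.card_coe_set_eq] at hbal
  have hcomp : ∀ a, (T.deleteEdges {s(u, v)}).Reachable a w →
      {x | (T.deleteEdges {s(u, v)}).Reachable w x} =
        {x | (T.deleteEdges {s(u, v)}).Reachable a x} :=
    fun _ ha ↦ Set.ext fun _ ↦ ⟨ha.trans, ha.symm.trans⟩
  rcases hT.connected.preconnected.reachable_or_reachable_deleteEdges u v w with hw | hw <;>
    rw [hcomp _ hw] <;> omega

theorem not_reachable_of_ne (hT : T.IsTree) (h : IsBalancedEdge T u v)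
    (h' : IsBalancedEdge T u' v') (hne : s(u, v) ≠ s(u', v')) :
    ¬ (T.deleteEdges {s(u, v)}).Reachable u u' := by
  intro huu'
  have hv := h.two_mul_ncard_setOf_reachable hT v
  have hu := h'.two_mul_ncard_setOf_reachable hT u
  set H := T.deleteEdges {s(u, v)}
  set H' := T.deleteEdges {s(u', v')}
  have hbridge : ¬ H.Reachable u v :=
    isBridge_iff.mp (isAcyclic_iff_forall_adj_isBridge.mp hT.isAcyclic h.1)
  have hvu' : ¬ H.Reachable v u' := fun hvu' ↦ hbridge (huu'.trans hvu'.symm)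
  have huv : H'.Adj u v := deleteEdges_adj.mpr ⟨h.1, hne⟩
  -- No walk from `v` avoiding `uv` can use `u'v'`, as it would reach `u'`.
  have hsub : insert u {x | H.Reachable v x} ⊆ {x | H'.Reachable u x} := by
    rintro x (rfl | hx)
    · exact .rfl
    · exact huv.reachable.trans ((reachable_deleteEdges_of_not_reachable hvu' hx).mono
        (deleteEdges_mono (deleteEdges_le _)))
  have hcard := Set.ncard_le_ncard hsub
  rw [Set.ncard_insert_of_notMem fun hx ↦ hbridge hx.symm] at hcard
  omega

theorem eq (hT : T.IsTree) (h : IsBalancedEdge T u v) (h' : IsBalancedEdge T u' v') :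
    s(u, v) = s(u', v') := by
  by_contra hne
  rcases hT.connected.preconnected.reachable_or_reachable_deleteEdges u v u' with hu | hv
  · exact h.not_reachable_of_ne hT h' hne hu
  · exact h.symm.not_reachable_of_ne hT h' (by rwa [Sym2.eq_swap]) (by rwa [Sym2.eq_swap])

end IsBalancedEdge

/-- **Uniqueness and invariance of the balanced edge.**
A finite tree has at most one balanced edge, and if a balanced edge exists it is mapped
to itself (as an unordered pair) by every automorphism of the tree. -/
theorem balanced_edge_unique_and_automorphism_invariant
    {V : Type*} [Fintype V] (T : SimpleGraph V) (hT : T.IsTree) :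
    (∀ u v u' v' : V, IsBalancedEdge T u v → IsBalancedEdge T u' v' →
      s(u, v) = s(u', v')) ∧
    (∀ u v : V, IsBalancedEdge T u v → ∀ f : T ≃g T, Sym2.map f s(u, v) = s(u, v)) := by
  refine ⟨fun u v u' v' h h' ↦ h.eq hT h', fun u v h f ↦ ?_⟩
  rw [Sym2.map_mk]
  exact (h.map f).eq hT h
end

section
/- Let V be a finite nonempty type and T : SimpleGraph V a tree. Suppose that no edge of T is balanced, i.e. for every edge {u, v} of T the two connected components of T with that edge deleted have different numbers of vertices. Then there exists a vertex v₀ ∈ V that is fixed by every graph automorphism of T. -/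
open Set

namespace SimpleGraph

variable {V V' : Type*} {G : SimpleGraph V} {G' : SimpleGraph V'} {a b u v w z p q : V}

def side (G : SimpleGraph V) (u v : V) : Set V :=
  {w | (G.deleteEdges {s(u, v)}).Reachable u w}

lemma side_def' (G : SimpleGraph V) (u v : V) :
    G.side v u = {w | (G.deleteEdges {s(u, v)}).Reachable v w} := by
  rw [side, Sym2.eq_swap]

lemma self_mem_side (G : SimpleGraph V) (u v : V) : u ∈ G.side u v :=
  Reachable.refl u

lemma mem_side_of_adj (h : G.Adj u w) (hwv : w ≠ v) : w ∈ G.side u v := by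
  refine Adj.reachable ((deleteEdges_adj ..).mpr ⟨h, fun he => hwv ?_⟩)
  exact Sym2.congr_right.mp (Set.mem_singleton_iff.mp he)

lemma IsAcyclic.notMem_side (hG : G.IsAcyclic) (h : G.Adj u v) : v ∉ G.side u v :=
  isBridge_iff.mp (isAcyclic_iff_forall_adj_isBridge.mp hG h)

lemma Reachable.deleteEdges_of_not_reachable {H : SimpleGraph V} {t : V} (h : H.Reachable a w)
    (ht : ¬ H.Reachable a t) (z : V) : (H.deleteEdges {s(t, z)}).Reachable a w := by
  classical
  obtain ⟨p⟩ := h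
  refine reachable_deleteEdges_iff_exists_walk.mpr ⟨p, fun he => ht ?_⟩
  exact (p.takeUntil t (p.fst_mem_support_of_mem_edges he)).reachable

lemma Reachable.exists_adj_mem_side (h : G.Reachable a b) (hab : a ≠ b) :
    ∃ u, G.Adj a u ∧ b ∈ G.side u a := by
  classical
  obtain ⟨p, hp⟩ := h.some.toPath
  cases p with
  | nil => exact absurd rfl hab
  | @cons _ u _ hau q =>
    rw [Walk.cons_isPath_iff] at hp
    refine ⟨u, hau, reachable_deleteEdges_iff_exists_walk.mpr ⟨q, fun he => hp.2 ?_⟩⟩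
    exact q.snd_mem_support_of_mem_edges he

lemma side_subset_side {u' : V} (hb : b ∉ G.side a u) (ha : a ∈ G.side u' b) :
    G.side a u ⊆ G.side u' b := by
  intro w hw
  have haw : (G.deleteEdges {s(b, u')}).Reachable a w :=
    (hw.deleteEdges_of_not_reachable hb u').mono (deleteEdges_mono (deleteEdges_le _))
  rw [Sym2.eq_swap] at haw
  exact ha.trans haw

lemma Connected.side_union_side (hG : G.Connected) (u v : V) :
    G.side u v ∪ G.side v u = univ := by
  set H := G.deleteEdges {s(u, v)}
  have step : ∀ {x y : V}, G.Adj x y → H.Reachable u x ∨ H.Reachable v x →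
      H.Reachable u y ∨ H.Reachable v y := by
    intro x y hxy hx
    by_cases he : s(x, y) = s(u, v)
    · rcases Sym2.eq_iff.mp he with ⟨-, rfl⟩ | ⟨-, rfl⟩
      exacts [Or.inr (Reachable.refl _), Or.inl (Reachable.refl _)]
    · have hH : H.Adj x y := (deleteEdges_adj ..).mpr ⟨hxy, he⟩
      exact hx.imp (·.trans hH.reachable) (·.trans hH.reachable)
  have walk : ∀ {x y : V} (p : G.Walk x y), H.Reachable u x ∨ H.Reachable v x →
      H.Reachable u y ∨ H.Reachable v y := by
    intro x y p
    induction p with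
    | nil => exact id
    | cons hxy _ ih => exact ih ∘ step hxy
  rw [side_def' G u v, eq_univ_iff_forall]
  exact fun w => walk (hG.preconnected u w).some (Or.inl (Reachable.refl u))

lemma IsAcyclic.disjoint_side (hG : G.IsAcyclic) (h : G.Adj u v) :
    Disjoint (G.side u v) (G.side v u) := by
  rw [side_def' G u v, Set.disjoint_left]
  exact fun w hu hv => hG.notMem_side h (hu.trans hv.symm)

lemma IsTree.compl_side (hG : G.IsTree) (h : G.Adj u v) : (G.side u v)ᶜ = G.side v u :=
  IsCompl.compl_eq
    ⟨hG.isAcyclic.disjoint_side h, codisjoint_iff.mpr (hG.connected.side_union_side u v)⟩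

lemma IsTree.ncard_side_add_ncard_side [Finite V] (hG : G.IsTree) (h : G.Adj u v) :
    (G.side u v).ncard + (G.side v u).ncard = Nat.card V := by
  rw [← hG.compl_side h, ncard_add_ncard_compl]

lemma IsAcyclic.side_ssubset_side (hG : G.IsAcyclic) (hp : G.Adj z p) (hq : G.Adj z q)
    (hpq : p ≠ q) : G.side p z ⊂ G.side z q := by
  have hq' : q ∉ G.side p z :=
    Set.disjoint_right.mp (hG.disjoint_side hp.symm) (mem_side_of_adj hq hpq.symm)
  refine ssubset_of_subset_not_subset (side_subset_side hq' (mem_side_of_adj hp hpq)) ?_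
  exact fun hsub => hG.notMem_side hp.symm (hsub (self_mem_side G z q))

def Iso.deleteEdge (f : G ≃g G') (u v : V) :
    G.deleteEdges {s(u, v)} ≃g G'.deleteEdges {s(f u, f v)} where
  toEquiv := f.toEquiv
  map_rel_iff' := by
    intro a b
    simp only [deleteEdges_adj, Set.mem_singleton_iff, Sym2.eq_iff, RelIso.coe_fn_toEquiv,
      f.map_adj_iff, f.injective.eq_iff]

lemma Iso.image_side (f : G ≃g G') (u v : V) : f '' G.side u v = G'.side (f u) (f v) := by
  ext w
  obtain ⟨x, rfl⟩ := f.surjective w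
  rw [f.injective.mem_set_image]
  exact (f.deleteEdge u v).reachable_iff.symm

def IsStrictCentroid (G : SimpleGraph V) (v : V) : Prop :=
  ∀ u, G.Adj v u → 2 * (G.side u v).ncard < Nat.card V

lemma IsStrictCentroid.map (f : G ≃g G') (hv : G.IsStrictCentroid v) :
    G'.IsStrictCentroid (f v) := by
  intro u hu
  obtain ⟨x, rfl⟩ := f.surjective u
  rw [← f.image_side, ncard_image_of_injective _ f.injective, ← Nat.card_congr f.toEquiv]
  exact hv x (f.map_adj_iff.mp hu)

lemma IsTree.eq_of_isStrictCentroid [Finite V] (hG : G.IsTree) (ha : G.IsStrictCentroid a)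
    (hb : G.IsStrictCentroid b) : a = b := by
  by_contra hab
  obtain ⟨u, hau, hbu⟩ := (hG.connected a b).exists_adj_mem_side hab
  obtain ⟨u', hbu', hau'⟩ := (hG.connected b a).exists_adj_mem_side (Ne.symm hab)
  have hb' : b ∉ G.side a u := Set.disjoint_right.mp (hG.isAcyclic.disjoint_side hau) hbu
  have hle := ncard_le_ncard (side_subset_side hb' hau')
  have := hG.ncard_side_add_ncard_side hau
  have := ha u hau
  have := hb u' hbu'
  omega

theorem IsTree.exists_isStrictCentroid [Finite V] [Nonempty V] (hG : G.IsTree)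
    (hnb : ∀ u v, G.Adj u v → (G.side u v).ncard ≠ (G.side v u).ncard) :
    ∃ v, G.IsStrictCentroid v := by
  set n := Nat.card V
  have minority_of_not_majority : ∀ u v, G.Adj u v → ¬ n < 2 * (G.side u v).ncard →
      2 * (G.side u v).ncard < n := by
    intro u v h hu
    have := hG.ncard_side_add_ncard_side h
    have := hnb u v h
    omega
  set majority := {e : V × V | G.Adj e.1 e.2 ∧ n < 2 * (G.side e.1 e.2).ncard}
  rcases majority.eq_empty_or_nonempty with hempty | hne
  · obtain ⟨v⟩ := ‹Nonempty V›
    exact ⟨v, fun u h => minority_of_not_majority u v h.symm fun hu =>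
      eq_empty_iff_forall_notMem.mp hempty (u, v) ⟨h.symm, hu⟩⟩
  obtain ⟨⟨u, v⟩, ⟨huv, hmaj⟩, hmin⟩ :=
    majority.exists_min_image (fun e => (G.side e.1 e.2).ncard) majority.toFinite hne
  dsimp only at huv hmaj
  refine ⟨u, fun x hux => minority_of_not_majority x u hux.symm fun hx => ?_⟩
  have hmin' : (G.side u v).ncard ≤ (G.side x u).ncard := hmin (x, u) ⟨hux.symm, hx⟩
  by_cases hxv : x = v
  · subst hxv
    have := hG.ncard_side_add_ncard_side huv
    omega
  · have := ncard_lt_ncard (hG.isAcyclic.side_ssubset_side hux huv hxv)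
    omega

lemma isBalancedEdge_iff [Fintype V] :
    IsBalancedEdge G u v ↔ G.Adj u v ∧ (G.side u v).ncard = (G.side v u).ncard := by
  rw [IsBalancedEdge, side_def' G u v, side, Nat.card_coe_set_eq, Nat.card_coe_set_eq]

end SimpleGraph

/-- **The unique sink.**
If a finite nonempty tree has no balanced edge, then it has a vertex fixed by every
automorphism. -/
theorem exists_fixed_vertex_of_no_balanced_edge
    {V : Type*} [Fintype V] [Nonempty V] (T : SimpleGraph V) (hT : T.IsTree)
    (hnb : ∀ u v : V, ¬ IsBalancedEdge T u v) :
    ∃ v₀ : V, ∀ f : T ≃g T, f v₀ = v₀ := by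
  obtain ⟨v₀, hv₀⟩ := hT.exists_isStrictCentroid fun u v h heq =>
    hnb u v (SimpleGraph.isBalancedEdge_iff.mpr ⟨h, heq⟩)
  exact ⟨v₀, fun f => hT.eq_of_isStrictCentroid (hv₀.map f) hv₀⟩
end

section
/- Let V be a finite type, T : SimpleGraph V a tree, u ∈ V, and let v and w be two distinct neighbors of u in T. Let C_v be the set of vertices reachable from v in the graph obtained from T by deleting the edge {u, v}, and let C_w be the set of vertices reachable from w in the graph obtained from T by deleting the edge {u, w}. Then C_v and C_w are disjoint; in particular it is impossible that both 2·|C_v| > |V| and 2·|C_w| > |V|. -/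
/-!
Every edge of a tree is a bridge. After deleting `uw`, the component of `w` does not contain `u`,
so walks inside it avoid `u` and hence also the edge `uv`. A vertex `x` common to both
components would then join `u` to `v` by `u — w ⇝ x ⇝ v` without using `uv`. Disjointness of
the two components bounds the sum of their sizes by `|V|`.
-/

lemma Set.natCard_add_natCard_le_of_disjoint {α : Type*} [Finite α] {s t : Set α}
    (hst : Disjoint s t) : Nat.card s + Nat.card t ≤ Nat.card α := by
  rw [Nat.card_coe_set_eq, Nat.card_coe_set_eq, ← Set.ncard_union_eq hst]
  exact Set.ncard_le_card _

namespace SimpleGraph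

variable {V : Type*} {G : SimpleGraph V} {u v w x : V}

lemma Reachable.deleteEdges_of_not_reachable_s6 (hx : G.Reachable w x) (hu : ¬G.Reachable w u)
    (v : V) : (G.deleteEdges {s(u, v)}).Reachable w x := by
  classical
  obtain ⟨q⟩ := hx
  have hq : s(u, v) ∉ q.edges := fun he ↦
    hu ⟨q.takeUntil u (q.fst_mem_support_of_mem_edges he)⟩
  exact (q.toDeleteEdge _ hq).reachable

lemma IsAcyclic.disjoint_reachable_deleteEdges (hG : G.IsAcyclic) (hvw : v ≠ w)
    (huv : G.Adj u v) (huw : G.Adj u w) :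
    Disjoint {x | (G.deleteEdges {s(u, v)}).Reachable v x}
      {x | (G.deleteEdges {s(u, w)}).Reachable w x} := by
  have hbridge := isAcyclic_iff_forall_adj_isBridge.mp hG
  rw [Set.disjoint_left]
  intro x (hvx : (G.deleteEdges {s(u, v)}).Reachable v x)
    (hwx : (G.deleteEdges {s(u, w)}).Reachable w x)
  have hwu : ¬(G.deleteEdges {s(u, w)}).Reachable w u := fun h ↦
    isBridge_iff.mp (hbridge huw) h.symm
  have hwx' : (G.deleteEdges {s(u, v)}).Reachable w x :=
    (hwx.deleteEdges_of_not_reachable_s6 hwu v).mono (deleteEdges_mono (deleteEdges_le _))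
  have huw' : (G.deleteEdges {s(u, v)}).Adj u w :=
    deleteEdges_adj.mpr ⟨huw, by rw [Set.mem_singleton_iff, Sym2.congr_right]; exact hvw.symm⟩
  exact isBridge_iff.mp (hbridge huv) (huw'.reachable.trans (hwx'.trans hvx.symm))

end SimpleGraph

/-- **At most one exiting edge per vertex.**
Let `T` be a finite tree, `u` a vertex, and `v ≠ w` two neighbors of `u`.  Let `C_v` be the
set of vertices reachable from `v` after deleting the edge `{u, v}`, and `C_w` the set of
vertices reachable from `w` after deleting the edge `{u, w}`.  Then `C_v` and `C_w` are
disjoint; in particular one cannot have both `2·|C_v| > |V|` and `2·|C_w| > |V|`. -/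
theorem components_disjoint_of_two_neighbors
    {V : Type*} [Fintype V] (T : SimpleGraph V) (hT : T.IsTree)
    (u v w : V) (hvw : v ≠ w) (huv : T.Adj u v) (huw : T.Adj u w) :
    Disjoint {x : V | (T.deleteEdges {s(u, v)}).Reachable v x}
      {x : V | (T.deleteEdges {s(u, w)}).Reachable w x} ∧
    ¬ (2 * Nat.card {x : V | (T.deleteEdges {s(u, v)}).Reachable v x} > Fintype.card V ∧
       2 * Nat.card {x : V | (T.deleteEdges {s(u, w)}).Reachable w x} > Fintype.card V) := by
  have hdisj := hT.isAcyclic.disjoint_reachable_deleteEdges hvw huv huw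
  have hcard := Set.natCard_add_natCard_le_of_disjoint hdisj
  rw [← Nat.card_eq_fintype_card]
  exact ⟨hdisj, by omega⟩
end

section
/- Let 𝔸 = (ℝ/ℤ) × [0,1] be the annulus with boundary ∂𝔸 = (ℝ/ℤ) × {0,1}. Let a, a′ ∈ ℝ and b, b′ ∈ ℝ/ℤ, and suppose the generalized Dehn twists α_{a,b} and α_{a′,b′} are homotopic rel ∂𝔸. Then a = a′ and b = b′. -/
/-- The annulus `(ℝ/ℤ) × [0,1]`. -/
abbrev Annulus : Type := AddCircle (1 : ℝ) × unitInterval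

/-- The boundary `(ℝ/ℤ) × {0,1}` of the annulus. -/
def annulusBoundary : Set Annulus := {p | p.2 = 0 ∨ p.2 = 1}

/-- The generalized Dehn twist `α_{a,b} (x, t) = (x + π(a·t) + b, t)`. -/
noncomputable def dehnTwist (a : ℝ) (b : AddCircle (1 : ℝ)) : C(Annulus, Annulus) :=
  ⟨fun p => (p.1 + ((a * (p.2 : ℝ) : ℝ) : AddCircle (1 : ℝ)) + b, p.2), by
    refine Continuous.prodMk ?_ continuous_snd
    exact ((continuous_fst.add ((AddCircle.continuous_mk' 1).comp
      (continuous_const.mul (continuous_subtype_val.comp continuous_snd)))).add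
      continuous_const)⟩

/-!
Along the radius `{0} × [0,1]` a homotopy rel `∂𝔸` between `α_{a,b}` and `α_{a',b'}` becomes a
homotopy rel endpoints between the circle paths `t ↦ π(a t) + b` and `t ↦ π(a' t) + b'`, which
start at the same point `b = b'` since the twists agree on `∂𝔸`. Their lifts to `ℝ` from a common
point `e` end at `a + e` and `a' + e`, and lifts of paths homotopic rel endpoints have the same
endpoint.
-/

open ContinuousMap unitInterval

theorem ContinuousMap.HomotopicRel.comp_of_mapsTo {X Y Z : Type*} [TopologicalSpace X]
    [TopologicalSpace Y] [TopologicalSpace Z] {f₀ f₁ : C(Y, Z)} {S : Set Y}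
    (h : f₀.HomotopicRel f₁ S) (g : C(X, Y)) {T : Set X} (hg : Set.MapsTo g T S) :
    (f₀.comp g).HomotopicRel (f₁.comp g) T :=
  h.map fun F ↦ ⟨F.toHomotopy.compContinuousMap g, fun t _ hx ↦ F.prop t _ (hg hx)⟩

theorem IsCoveringMap.apply_one_eq_of_homotopicRel_comp {E X : Type*} [TopologicalSpace E]
    [TopologicalSpace X] {p : E → X} (cov : IsCoveringMap p) {Γ₀ Γ₁ : C(I, E)}
    (h : (ContinuousMap.comp ⟨p, cov.continuous⟩ Γ₀).HomotopicRel
      (.comp ⟨p, cov.continuous⟩ Γ₁) {0, 1})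
    (h₀ : Γ₀ 0 = Γ₁ 0) : Γ₀ 1 = Γ₁ 1 :=
  ((cov.homotopicRel_iff_comp ⟨0, .inl rfl, h₀⟩).mpr h).fst_eq_snd (.inr rfl)

def annulusRadius : C(I, Annulus) := ⟨fun t ↦ (0, t), by fun_prop⟩

theorem mapsTo_annulusRadius_boundary : Set.MapsTo annulusRadius {0, 1} annulusBoundary :=
  fun _ ht ↦ ht

theorem fst_comp_dehnTwist_comp_annulusRadius (a e : ℝ) :
    fst.comp ((dehnTwist a e).comp annulusRadius) =
      ContinuousMap.comp ⟨((↑) : ℝ → AddCircle (1 : ℝ)), AddCircle.continuous_mk' 1⟩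
        ⟨fun t : I ↦ a * t + e, by fun_prop⟩ := by
  ext t
  simp only [comp_apply, fst_apply, dehnTwist, annulusRadius, coe_mk, zero_add]
  exact (QuotientAddGroup.mk_add _ _ _).symm

/-- **Uniqueness part of Lemma 3.2.**
Two generalized Dehn twists which are homotopic rel boundary are equal:
if `α_{a,b}` and `α_{a',b'}` are homotopic rel `∂𝔸` then `a = a'` and `b = b'`. -/
theorem dehnTwist_homotopicRel_unique
    (a a' : ℝ) (b b' : AddCircle (1 : ℝ))
    (h : ContinuousMap.HomotopicRel (dehnTwist a b) (dehnTwist a' b') annulusBoundary) :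
    a = a' ∧ b = b' := by
  have hb : b = b' := by
    simpa [dehnTwist] using congrArg Prod.fst (h.fst_eq_snd (x := (0, 0)) (.inl rfl))
  subst hb
  obtain ⟨e, rfl⟩ := QuotientAddGroup.mk_surjective b
  have hpath :=
    (h.comp_of_mapsTo annulusRadius mapsTo_annulusRadius_boundary).comp_continuousMap fst
  rw [fst_comp_dehnTwist_comp_annulusRadius, fst_comp_dehnTwist_comp_annulusRadius] at hpath
  have hend := (AddCircle.isCoveringMap_coe 1).apply_one_eq_of_homotopicRel_comp hpath (by simp)
  exact ⟨by simpa using hend, rfl⟩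
end

section
/- Let 𝔸 = (ℝ/ℤ) × [0,1] be the annulus with boundary ∂𝔸 = (ℝ/ℤ) × {0,1}. Let f and g be homeomorphisms of 𝔸 such that for some rational points β₀, β₁, γ₀, γ₁ of ℝ/ℤ one has f(x, 0) = (x + β₀, 0), f(x, 1) = (x + β₁, 1), g(x, 0) = (x + γ₀, 0), and g(x, 1) = (x + γ₁, 1) for all x ∈ ℝ/ℤ. Then f ∘ g and g ∘ f are homotopic rel ∂𝔸. -/
/-!
Homotopy lifting through `ℝ → ℝ/ℤ`, started from a real lift of the bottom rotation, writes the
angular coordinate of a homeomorphism `f` as `x + W_f` with `W_f` real valued and continuous; since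
`f` rotates each boundary circle, `W_f` is constant on each of them. Then
`D = W_f + W_g ∘ f - W_g - W_f ∘ g` is a real lift of the angular difference between `g ∘ f` and
`f ∘ g`, and it vanishes on `∂𝔸`. Moving the angular coordinate of `f ∘ g` by `t • D` and
interpolating the radial coordinates linearly is a homotopy to `g ∘ f` fixing `∂𝔸` pointwise.
-/

open Set unitInterval

theorem IsCoveringMap.exists_lift_of_const_at_zero {A E B : Type*} [TopologicalSpace A]
    [TopologicalSpace E] [TopologicalSpace B] {π : E → B} (hπ : IsCoveringMap π)
    (w : C(A × I, B)) (e : E) (h : ∀ a, w (a, 0) = π e) :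
    ∃ W : C(A × I, E), π ∘ W = w :=
  ⟨(hπ.liftHomotopy (w.comp .prodSwap) (.const A e) h).comp .prodSwap, by
    ext ⟨a, t⟩
    exact congr_fun (hπ.liftHomotopy_lifts _ _ h) (t, a)⟩

section HomotopicRel

variable {X : Type*} [TopologicalSpace X] {S : Set X}

theorem AddCircle.homotopicRel_of_eq_add_coe {p : ℝ} {F G : C(X, AddCircle p)} (D : C(X, ℝ))
    (hD : ∀ x, G x = F x + D x) (hS : ∀ x ∈ S, D x = 0) : F.HomotopicRel G S :=
  ⟨{ toFun := fun tx => F tx.2 + ((tx.1 * D tx.2 : ℝ) : AddCircle p)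
     continuous_toFun := by fun_prop
     map_zero_left := by simp
     map_one_left := by simp [hD]
     prop' := by simp +contextual [hS] }⟩

theorem unitInterval.homotopicRel_of_eqOn {F G : C(X, I)} (h : EqOn F G S) :
    F.HomotopicRel G S :=
  ⟨{ toFun := fun tx => ⟨(1 - tx.1) * F tx.2 + tx.1 * G tx.2,
       convex_Icc 0 1 (F tx.2).2 (G tx.2).2 (sub_nonneg.2 tx.1.2.2) tx.1.2.1 (by ring)⟩
     continuous_toFun := by fun_prop
     map_zero_left := by simp
     map_one_left := by simp
     prop' := fun t x hx => by ext; simp only [ContinuousMap.coe_mk, h hx]; ring }⟩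

theorem Annulus.homotopicRel_of_eq_add_coe {F G : C(X, Annulus)} (D : C(X, ℝ))
    (hD : ∀ x, (G x).1 = (F x).1 + D x) (hS : ∀ x ∈ S, D x = 0)
    (hS' : ∀ x ∈ S, (F x).2 = (G x).2) : F.HomotopicRel G S := by
  obtain ⟨H₁⟩ := AddCircle.homotopicRel_of_eq_add_coe (F := .comp .fst F) (G := .comp .fst G) D
    hD hS
  obtain ⟨H₂⟩ := unitInterval.homotopicRel_of_eqOn (F := .comp .snd F) (G := .comp .snd G) hS'
  exact ⟨(H₁.prod H₂).cast rfl rfl⟩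

end HomotopicRel

theorem Annulus.exists_lift_displacement (f : C(Annulus, Annulus)) (β₀ β₁ : AddCircle (1 : ℝ))
    (h0 : ∀ x, (f (x, 0)).1 = x + β₀) (h1 : ∀ x, (f (x, 1)).1 = x + β₁) :
    ∃ W : C(Annulus, ℝ), (∀ p, (f p).1 = p.1 + W p) ∧
      ∀ j : I, (j = 0 ∨ j = 1) → ∀ x y, W (x, j) = W (y, j) := by
  obtain ⟨b, rfl⟩ := QuotientAddGroup.mk_surjective β₀
  obtain ⟨W, hW⟩ := (AddCircle.isCoveringMap_coe (1 : ℝ)).exists_lift_of_const_at_zero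
    ⟨fun p => (f p).1 - p.1, by fun_prop⟩ b (by simp [h0])
  have hWf : ∀ p, (W p : AddCircle (1 : ℝ)) = (f p).1 - p.1 := congr_fun hW
  refine ⟨W, fun p => by rw [hWf]; abel, fun j hj x y => ?_⟩
  refine (AddCircle.isCoveringMap_coe (1 : ℝ)).const_of_comp (g := fun x => W (x, j))
    (by fun_prop) (fun x x' => ?_) x y
  rcases hj with rfl | rfl <;> simp [hWf, h0, h1]

theorem comp_homotopicRel_comm_of_boundary_rotations_general
    (f g : Annulus ≃ₜ Annulus) (β₀ β₁ γ₀ γ₁ : AddCircle (1 : ℝ))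
    (hf0 : ∀ x : AddCircle (1 : ℝ), f (x, 0) = (x + β₀, 0))
    (hf1 : ∀ x : AddCircle (1 : ℝ), f (x, 1) = (x + β₁, 1))
    (hg0 : ∀ x : AddCircle (1 : ℝ), g (x, 0) = (x + γ₀, 0))
    (hg1 : ∀ x : AddCircle (1 : ℝ), g (x, 1) = (x + γ₁, 1)) :
    ContinuousMap.HomotopicRel
      ((f : C(Annulus, Annulus)).comp (g : C(Annulus, Annulus)))
      ((g : C(Annulus, Annulus)).comp (f : C(Annulus, Annulus)))
      annulusBoundary := by
  obtain ⟨Wf, hWf, hWf_const⟩ := Annulus.exists_lift_displacement f β₀ β₁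
    (by simp [hf0]) (by simp [hf1])
  obtain ⟨Wg, hWg, hWg_const⟩ := Annulus.exists_lift_displacement g γ₀ γ₁
    (by simp [hg0]) (by simp [hg1])
  simp only [ContinuousMap.coe_coe] at hWf hWg
  refine Annulus.homotopicRel_of_eq_add_coe (Wf + Wg.comp f - Wg - Wf.comp g)
    (fun p => ?_) ?_ ?_
  · simp only [ContinuousMap.comp_apply, ContinuousMap.coe_coe, ContinuousMap.sub_apply,
      ContinuousMap.add_apply, AddCircle.coe_add, AddCircle.coe_sub, hWf, hWg]
    abel
  · rintro ⟨x, j⟩ (rfl | rfl)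
    · simp [hf0, hg0, hWf_const 0 (.inl rfl) (x + γ₀) x, hWg_const 0 (.inl rfl) (x + β₀) x]
    · simp [hf1, hg1, hWf_const 1 (.inr rfl) (x + γ₁) x, hWg_const 1 (.inr rfl) (x + β₁) x]
  · rintro ⟨x, j⟩ (rfl | rfl) <;> simp [hf0, hg0, hf1, hg1]

/-- **Commutativity up to isotopy rel boundary (consequence of Lemma 3.2).**
If `f` and `g` are homeomorphisms of the annulus which restrict to rational rotations on
the two boundary circles, then `f ∘ g` and `g ∘ f` are homotopic rel `∂𝔸`. -/
theorem comp_homotopicRel_comm_of_boundary_rotations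
    (f g : Annulus ≃ₜ Annulus) (β₀ β₁ γ₀ γ₁ : AddCircle (1 : ℝ))
    (hβ₀ : ∃ q : ℚ, β₀ = ((q : ℝ) : AddCircle (1 : ℝ)))
    (hβ₁ : ∃ q : ℚ, β₁ = ((q : ℝ) : AddCircle (1 : ℝ)))
    (hγ₀ : ∃ q : ℚ, γ₀ = ((q : ℝ) : AddCircle (1 : ℝ)))
    (hγ₁ : ∃ q : ℚ, γ₁ = ((q : ℝ) : AddCircle (1 : ℝ)))
    (hf0 : ∀ x : AddCircle (1 : ℝ), f (x, 0) = (x + β₀, 0))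
    (hf1 : ∀ x : AddCircle (1 : ℝ), f (x, 1) = (x + β₁, 1))
    (hg0 : ∀ x : AddCircle (1 : ℝ), g (x, 0) = (x + γ₀, 0))
    (hg1 : ∀ x : AddCircle (1 : ℝ), g (x, 1) = (x + γ₁, 1)) :
    ContinuousMap.HomotopicRel
      ((f : C(Annulus, Annulus)).comp (g : C(Annulus, Annulus)))
      ((g : C(Annulus, Annulus)).comp (f : C(Annulus, Annulus)))
      annulusBoundary :=
  comp_homotopicRel_comm_of_boundary_rotations_general f g β₀ β₁ γ₀ γ₁ hf0 hf1 hg0 hg1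
end
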